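/- arXiv:2110.10948 — 2 statements merged into one kernel-verified Lean document; each statement's English description precedes it below -/
import Mathlib

section
/- Let Q : Polynomial ℂ be a nonzero polynomial such that every root of Q lying in the closed unit ball Metric.closedBall (0:ℂ) 1 actually lies in the open unit ball Metric.ball (0:ℂ) 1 and is simple (Q.derivative.eval z ≠ 0 at every such root z). Then there exists δ > 0 such that for every function h : ℂ → ℂ with ContDiff ℝ 1 h and satisfying ‖h z‖ ≤ δ and ‖fderiv ℝ h z‖ ≤ δ for all z ∈ Metric.closedBall (0:ℂ) 1, the set {z ∈ Metric.ball (0:ℂ) 1 | Q.eval z + h z = 0} is finite and has the same cardinality (Set.ncard) as {z ∈ Metric.ball (0:ℂ) 1 | Q.eval z = 0}, and at each of its points z₀ the real derivative fderiv ℝ (fun z => Q.eval z + h z) z₀ is a bijective linear map. -/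
/-!
The zeros of `Q` in the open disk form a finite set `S` of simple zeros. Take `m > 0` below
`|Q'|` on `S`, and `r > 0` so small that the closed `r`-balls around `S` are disjoint, lie in
the disk, and `Q'` moves by at most `m / 4` on each of them; off the open `r`-balls `|Q| ≥ ε > 0`
on the closed disk. For `h` with `‖h‖, ‖Dh‖ ≤ δ` small, the zeros of `Q + h` in the disk lie in
these balls, and on the ball around `z₀ ∈ S` the real derivative of `Q + h` stays within `m / 2`
of multiplication by `Q'(z₀)`, whose inverse has norm at most `1 / m`. The inverse function
machinery of `ApproximatesLinearOn` then gives exactly one zero of `Q + h` in each ball, with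
invertible derivative, so these zeros are in bijection with `S`.
-/

open Metric Set Filter Topology Function ContinuousLinearMap
open scoped NNReal

section ApproximatesLinearOn

variable {E F : Type*} [NormedAddCommGroup E] [NormedSpace ℝ E] [CompleteSpace E]
  [NormedAddCommGroup F] [NormedSpace ℝ F]

theorem ApproximatesLinearOn.existsUnique_zero_mem_closedBall {f : E → F}
    {A : E ≃L[ℝ] F} {c : ℝ≥0} {b : E} {r : ℝ}
    (hf : ApproximatesLinearOn f (A : E →L[ℝ] F) (closedBall b r) c)
    (hc : c < ‖(A.symm : F →L[ℝ] E)‖₊⁻¹)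
    (hb : ‖f b‖ ≤ (‖(A.symm : F →L[ℝ] E)‖⁻¹ - c) * r) :
    ∃! x, x ∈ closedBall b r ∧ f x = 0 := by
  have hc' : 0 < ‖(A.symm : F →L[ℝ] E)‖⁻¹ - c := by
    rw [sub_pos, ← coe_nnnorm, ← NNReal.coe_inv]; exact_mod_cast hc
  have hr : 0 ≤ r := nonneg_of_mul_nonneg_right ((norm_nonneg _).trans hb) hc'
  obtain ⟨x, hx, hfx⟩ := hf.surjOn_closedBall_of_nonlinearRightInverse
    A.toNonlinearRightInverse hr subset_rfl (a := 0)
    (mem_closedBall.2 <| by rw [dist_comm, dist_zero_right]; exact hb)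
  exact ⟨x, ⟨hx, hfx⟩, fun y hy => hf.injOn (Or.inr hc) hy.1 hx (hy.2.trans hfx.symm)⟩

theorem existsUnique_zero_mem_closedBall_of_norm_fderiv_sub_le {f : E → F}
    {f' : E → E →L[ℝ] F} {A : E ≃L[ℝ] F} {b : E} {r C : ℝ}
    (hf : ∀ x ∈ closedBall b r, HasFDerivAt f (f' x) x)
    (hC : ∀ x ∈ closedBall b r, ‖f' x - A‖ ≤ C) (hCA : C < ‖(A.symm : F →L[ℝ] E)‖⁻¹)
    (hb : ‖f b‖ ≤ (‖(A.symm : F →L[ℝ] E)‖⁻¹ - C) * r) :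
    ∃! x, x ∈ closedBall b r ∧ f x = 0 := by
  have hr : 0 ≤ r := nonneg_of_mul_nonneg_right ((norm_nonneg _).trans hb) (sub_pos.2 hCA)
  lift C to ℝ≥0 using (norm_nonneg _).trans (hC b (mem_closedBall_self hr))
  have hfA : ApproximatesLinearOn f (A : E →L[ℝ] F) (closedBall b r) C := fun x hx y hy => by
    simpa only [norm_sub_rev (x - y), neg_sub] using
      (convex_closedBall b r).norm_image_sub_le_of_norm_hasFDerivWithin_le'
        (fun z hz => (hf z hz).hasFDerivWithinAt) hC hy hx
  refine hfA.existsUnique_zero_mem_closedBall ?_ hb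
  rwa [← NNReal.coe_lt_coe, NNReal.coe_inv, coe_nnnorm]

theorem ContinuousLinearMap.bijective_of_norm_sub_lt (A : E ≃L[ℝ] F)
    {B : E →L[ℝ] F} (hB : ‖B - A‖ < ‖(A.symm : F →L[ℝ] E)‖⁻¹) : Bijective B := by
  have hBA : ApproximatesLinearOn B (A : E →L[ℝ] F) univ ‖B - A‖₊ := fun x _ y _ => by
    simpa [← map_sub] using (B - (A : E →L[ℝ] F)).le_opNorm (x - y)
  have hB' : ‖B - A‖₊ < ‖(A.symm : F →L[ℝ] E)‖₊⁻¹ := by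
    rwa [← NNReal.coe_lt_coe, NNReal.coe_inv, coe_nnnorm, coe_nnnorm]
  exact ⟨injOn_univ.1 (hBA.injOn (Or.inr hB')), hBA.surjective (Or.inr hB')⟩

end ApproximatesLinearOn

theorem Set.Finite.exists_pos_pairwiseDisjoint_closedBall_subset {α : Type*} [MetricSpace α]
    {S : Set α} (hS : S.Finite) {U : α → Set α} (hU : ∀ x ∈ S, U x ∈ 𝓝 x) :
    ∃ r > 0, S.PairwiseDisjoint (closedBall · r) ∧ ∀ x ∈ S, closedBall x r ⊆ U x := by
  have hsep : ∀ᶠ r in 𝓝 (0 : ℝ), ∀ x ∈ S, ∀ y ∈ S, x ≠ y → r + r < dist x y :=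
    (eventually_all_finite hS).2 fun x _ => (eventually_all_finite hS).2 fun y _ =>
      eventually_imp_distrib_left.2 fun hxy =>
        (eventually_lt_nhds (half_pos (dist_pos.2 hxy))).mono fun r hr => by linarith
  have hsub : ∀ᶠ r in 𝓝 (0 : ℝ), ∀ x ∈ S, closedBall x r ⊆ U x :=
    (eventually_all_finite hS).2 fun x hx => eventually_closedBall_subset (hU x hx)
  obtain ⟨r, hr, hsep, hsub⟩ := (hsep.and hsub).exists_gt
  exact ⟨r, hr, fun x hx y hy hxy => closedBall_disjoint_closedBall (hsep x hx y hy hxy), hsub⟩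

theorem Set.PairwiseDisjoint.exists_bijOn_of_existsUnique {ι α : Type*} [Nonempty α] {S : Set ι}
    {Z : Set α} {B : ι → Set α} (hdisj : S.PairwiseDisjoint B) (hcover : Z ⊆ ⋃ i ∈ S, B i)
    (huniq : ∀ i ∈ S, ∃! x, x ∈ B i ∧ x ∈ Z) : ∃ φ : ι → α, BijOn φ S Z := by
  choose! φ hφ hφuniq using huniq
  refine ⟨φ, fun i hi => (hφ i hi).2, fun i hi j hj hij => ?_, fun x hx => ?_⟩
  · exact hdisj.elim hi hj (not_disjoint_iff.2 ⟨φ i, (hφ i hi).1, hij ▸ (hφ j hj).1⟩)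
  · obtain ⟨i, hi, hxi⟩ := mem_iUnion₂.1 (hcover hx)
    exact ⟨i, hi, (hφuniq i hi x ⟨hxi, hx⟩).symm⟩

section PerturbationOfSimpleZero

open ContinuousLinearEquiv

variable {𝕜 : Type*} [RCLike 𝕜] {f h : 𝕜 → 𝕜} {a z : 𝕜}

-- `unitsEquivAut 𝕜 u` is multiplication by the unit `u`.
theorem norm_symm_restrictScalars_unitsEquivAut_inv (u : 𝕜ˣ) :
    ‖(((unitsEquivAut 𝕜 u).restrictScalars ℝ).symm : 𝕜 →L[ℝ] 𝕜)‖⁻¹ = ‖(u : 𝕜)‖ := by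
  change ‖(toSpanSingleton 𝕜 ((u⁻¹ : 𝕜ˣ) : 𝕜)).restrictScalars ℝ‖⁻¹ = _
  rw [norm_restrictScalars, norm_toSpanSingleton, Units.val_inv_eq_inv_val, norm_inv, inv_inv]

theorem HasDerivAt.fderiv_add_real (hf : HasDerivAt f a z) (hh : DifferentiableAt ℝ h z) :
    fderiv ℝ (fun z => f z + h z) z = (toSpanSingleton 𝕜 a).restrictScalars ℝ + fderiv ℝ h z :=
  ((hf.hasFDerivAt.restrictScalars ℝ).add hh.hasFDerivAt).fderiv

theorem norm_fderiv_add_sub_le (u : 𝕜ˣ) (hf : HasDerivAt f a z) (hh : DifferentiableAt ℝ h z) :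
    ‖fderiv ℝ (fun z => f z + h z) z - ((unitsEquivAut 𝕜 u).restrictScalars ℝ : 𝕜 →L[ℝ] 𝕜)‖
      ≤ ‖a - u‖ + ‖fderiv ℝ h z‖ := by
  rw [hf.fderiv_add_real hh, add_sub_right_comm]
  refine (norm_add_le _ _).trans_eq ?_
  change ‖(toSpanSingleton 𝕜 a).restrictScalars ℝ
    - (toSpanSingleton 𝕜 (u : 𝕜)).restrictScalars ℝ‖ + _ = _
  have hsub : toSpanSingleton 𝕜 a - toSpanSingleton 𝕜 (u : 𝕜) = toSpanSingleton 𝕜 (a - u) := by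
    ext; simp
  rw [← restrictScalars_sub, norm_restrictScalars, hsub, norm_toSpanSingleton]

theorem bijective_fderiv_add_of_norm_fderiv_lt (hf : HasDerivAt f a z)
    (hh : DifferentiableAt ℝ h z) (hlt : ‖fderiv ℝ h z‖ < ‖a‖) :
    Bijective (fderiv ℝ (fun z => f z + h z) z) := by
  have ha : a ≠ 0 := norm_pos_iff.1 ((norm_nonneg _).trans_lt hlt)
  refine bijective_of_norm_sub_lt ((unitsEquivAut 𝕜 (Units.mk0 a ha)).restrictScalars ℝ) ?_
  rw [norm_symm_restrictScalars_unitsEquivAut_inv]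
  simpa using (norm_fderiv_add_sub_le (Units.mk0 a ha) hf hh).trans_lt (by simpa using hlt)

theorem existsUnique_zero_add_mem_closedBall {f' : 𝕜 → 𝕜} (u : 𝕜ˣ) {z₀ : 𝕜} {r C : ℝ}
    (hf : ∀ z, HasDerivAt f (f' z) z) (hh : Differentiable ℝ h)
    (hC : ∀ z ∈ closedBall z₀ r, ‖f' z - u‖ + ‖fderiv ℝ h z‖ ≤ C) (hCu : C < ‖(u : 𝕜)‖)
    (hz₀ : ‖f z₀ + h z₀‖ ≤ (‖(u : 𝕜)‖ - C) * r) :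
    ∃! z, z ∈ closedBall z₀ r ∧ f z + h z = 0 := by
  rw [← norm_symm_restrictScalars_unitsEquivAut_inv] at hCu hz₀
  exact existsUnique_zero_mem_closedBall_of_norm_fderiv_sub_le
    (fun z _ => (((hf z).differentiableAt.restrictScalars ℝ).add (hh z)).hasFDerivAt)
    (fun z hz => (norm_fderiv_add_sub_le u (hf z) (hh z)).trans (hC z hz)) hCu hz₀

theorem existsUnique_zero_add_mem_closedBall_and_bijective_fderiv {f' : 𝕜 → 𝕜} {z₀ : 𝕜}
    {r m : ℝ} (hf : ∀ z, HasDerivAt f (f' z) z) (hh : Differentiable ℝ h) (hfz₀ : f z₀ = 0)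
    (hm : 0 < m) (hmz₀ : m ≤ ‖f' z₀‖) (hf' : ∀ z ∈ closedBall z₀ r, ‖f' z - f' z₀‖ ≤ m / 4)
    (hDh : ∀ z ∈ closedBall z₀ r, ‖fderiv ℝ h z‖ ≤ m / 4) (hhz₀ : ‖h z₀‖ ≤ m * r / 2) :
    (∃! z, z ∈ closedBall z₀ r ∧ f z + h z = 0) ∧
      ∀ z ∈ closedBall z₀ r, Bijective (fderiv ℝ (fun z => f z + h z) z) := by
  have hr : 0 ≤ r := by nlinarith [norm_nonneg (h z₀)]
  have hf'z₀ : f' z₀ ≠ 0 := norm_pos_iff.1 (hm.trans_le hmz₀)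
  refine ⟨existsUnique_zero_add_mem_closedBall (Units.mk0 _ hf'z₀) (C := m / 2) hf hh
    (fun z hz => ?_) ?_ ?_, fun z hz => bijective_fderiv_add_of_norm_fderiv_lt (hf z) (hh z) ?_⟩
  · rw [Units.val_mk0]
    linarith [hf' z hz, hDh z hz]
  · rw [Units.val_mk0]
    linarith
  · rw [hfz₀, zero_add, Units.val_mk0]
    nlinarith
  · linarith [hf' z hz, hDh z hz, norm_sub_norm_le (f' z₀) (f' z), norm_sub_rev (f' z₀) (f' z)]

end PerturbationOfSimpleZero

theorem setOf_add_eq_zero_subset_of_norm_lt {α E : Type*} [NormedAddCommGroup E] {f h : α → E}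
    {U V : Set α} (hlt : ∀ z ∈ U \ V, ‖h z‖ < ‖f z‖) : {z ∈ U | f z + h z = 0} ⊆ V := by
  intro z ⟨hzU, hz⟩
  by_contra hzV
  have := hlt z ⟨hzU, hzV⟩
  rw [eq_neg_of_add_eq_zero_left hz, norm_neg] at this
  exact this.false

/-- stability of the number of zeros (eq. (10) of the paper): a polynomial
all of whose roots in the closed unit disk are nondegenerate and interior keeps the same
number of zeros in the open unit disk, all still nondegenerate, after any sufficiently
`C¹`-small real-differentiable perturbation `h`. -/
theorem zeros_stable_under_C1_small_perturbation
    (Q : Polynomial ℂ) (hQ : Q ≠ 0)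
    (hroots : ∀ z ∈ Metric.closedBall (0 : ℂ) 1, Q.eval z = 0 →
      z ∈ Metric.ball (0 : ℂ) 1 ∧ Q.derivative.eval z ≠ 0) :
    ∃ δ : ℝ, 0 < δ ∧
      ∀ h : ℂ → ℂ, ContDiff ℝ 1 h →
        (∀ z ∈ Metric.closedBall (0 : ℂ) 1, ‖h z‖ ≤ δ ∧ ‖fderiv ℝ h z‖ ≤ δ) →
        {z ∈ Metric.ball (0 : ℂ) 1 | Q.eval z + h z = 0}.Finite ∧
        {z ∈ Metric.ball (0 : ℂ) 1 | Q.eval z + h z = 0}.ncard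
          = {z ∈ Metric.ball (0 : ℂ) 1 | Q.eval z = 0}.ncard ∧
        ∀ z₀ ∈ {z ∈ Metric.ball (0 : ℂ) 1 | Q.eval z + h z = 0},
          Function.Bijective (fderiv ℝ (fun z => Q.eval z + h z) z₀) := by
  set S := {z ∈ ball (0 : ℂ) 1 | Q.eval z = 0}
  set Q' := Q.derivative
  have hSfin : S.Finite := (Polynomial.finite_setOfPred_isRoot hQ).subset fun z hz => hz.2
  obtain ⟨m, hm, hmS⟩ := hSfin.isCompact.exists_forall_le' Q'.continuous.norm.continuousOn
    fun z hz => norm_pos_iff.2 (hroots z (ball_subset_closedBall hz.1) hz.2).2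
  obtain ⟨r, hr, hdisj, hrS⟩ := hSfin.exists_pos_pairwiseDisjoint_closedBall_subset
    (U := fun z₀ => ball 0 1 ∩ (Q'.eval ·) ⁻¹' closedBall (Q'.eval z₀) (m / 4))
    fun z₀ hz₀ => inter_mem (isOpen_ball.mem_nhds hz₀.1)
      (Q'.continuous.continuousAt.preimage_mem_nhds (closedBall_mem_nhds _ (by positivity)))
  obtain ⟨ε, hε, hεK⟩ := ((isCompact_closedBall (0 : ℂ) 1).diff
    (isOpen_biUnion fun z₀ _ => isOpen_ball (x := z₀) (ε := r))).exists_forall_le'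
    Q.continuous.norm.continuousOn fun z hz => norm_pos_iff.2 fun hQz =>
      hz.2 (mem_biUnion (show z ∈ S from ⟨(hroots z hz.1 hQz).1, hQz⟩) (mem_ball_self hr))
  refine ⟨min (ε / 2) (min (m / 4) (m * r / 2)), by positivity, fun h hh hbound => ?_⟩
  set δ := min (ε / 2) (min (m / 4) (m * r / 2))
  have hδε : δ < ε := (min_le_left _ _).trans_lt (half_lt_self hε)
  have hδm : δ ≤ m / 4 := (min_le_right _ _).trans (min_le_left _ _)
  have hδr : δ ≤ m * r / 2 := (min_le_right _ _).trans (min_le_right _ _)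
  have hball : ∀ z₀ ∈ S, ∀ z ∈ closedBall z₀ r, z ∈ closedBall (0 : ℂ) 1 :=
    fun z₀ hz₀ z hz => ball_subset_closedBall (hrS z₀ hz₀ hz).1
  have hlocal := fun z₀ (hz₀ : z₀ ∈ S) =>
    existsUnique_zero_add_mem_closedBall_and_bijective_fderiv Q.hasDerivAt
      (hh.differentiable one_ne_zero) hz₀.2 hm (hmS z₀ hz₀)
      (fun z hz => mem_closedBall_iff_norm.1 (hrS z₀ hz₀ hz).2)
      (fun z hz => (hbound z (hball z₀ hz₀ z hz)).2.trans hδm)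
      ((hbound z₀ (hball z₀ hz₀ z₀ (mem_closedBall_self hr.le))).1.trans hδr)
  have hcover : {z ∈ ball (0 : ℂ) 1 | Q.eval z + h z = 0} ⊆ ⋃ z₀ ∈ S, closedBall z₀ r :=
    setOf_add_eq_zero_subset_of_norm_lt fun z ⟨hz, hzS⟩ => by
      have hzK : z ∈ closedBall 0 1 \ ⋃ z₀ ∈ S, ball z₀ r := ⟨ball_subset_closedBall hz,
        fun hz' => hzS (biUnion_mono subset_rfl (fun _ _ => ball_subset_closedBall) hz')⟩
      linarith [(hbound z hzK.1).1, hεK z hzK]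
  obtain ⟨φ, hφ⟩ := hdisj.exists_bijOn_of_existsUnique hcover fun z₀ hz₀ => by
    obtain ⟨z, ⟨hz, hz0⟩, huniq⟩ := (hlocal z₀ hz₀).1
    exact ⟨z, ⟨hz, (hrS z₀ hz₀ hz).1, hz0⟩, fun w hw => huniq w ⟨hw.1, hw.2.2⟩⟩
  refine ⟨hφ.image_eq ▸ hSfin.image φ, hφ.ncard_eq.symm, fun z hz => ?_⟩
  obtain ⟨z₀, hz₀, hzr⟩ := mem_iUnion₂.1 (hcover hz)
  exact (hlocal z₀ hz₀).2 z hzr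
end

section
/- Let R ∈ MvPolynomial (Fin 2) ℂ with R.totalDegree = k ≥ 1 and with the coefficient of the monomial (X 1)^k in R nonzero, and let s : Polynomial ℂ with natDegree s = d ≥ 2. Let R̃ ∈ MvPolynomial (Fin 2) ℂ be the polynomial obtained from R by the substitution X 0 ↦ X 0 and X 1 ↦ X 1 − s(X 0) (i.e., R̃(w₁, w₂) = R(w₁, w₂ − s.eval w₁) for all w₁ w₂ : ℂ). Then R̃.totalDegree = k * d. -/
/-!
The substitution is the algebra map `X 0 ↦ X 0`, `X 1 ↦ X 1 - s(X 0)`. Every variable is sent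
to a polynomial of total degree at most `d`, so the total degree is at most `k * d`. Conversely,
setting `X 1 = 0` turns the result into the one-variable polynomial `R(t, -s(t))`, whose degree
bounds the total degree from below. Since `d ≥ 2`, the monomial `X 1 ^ k` is the only monomial of `R` that
reaches `t ^ (k * d)` there, contributing its coefficient times `(-leadingCoeff s) ^ k ≠ 0`.
-/

open MvPolynomial

namespace MvPolynomial

variable {σ τ R : Type*} [CommSemiring R]

theorem totalDegree_X_le (i : σ) : (X i : MvPolynomial σ R).totalDegree ≤ 1 :=
  (totalDegree_monomial_le _ _).trans (by simp)

theorem totalDegree_aeval_le {f : σ → MvPolynomial τ R} {D : ℕ}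
    (hf : ∀ i, (f i).totalDegree ≤ D) (p : MvPolynomial σ R) :
    (aeval f p).totalDegree ≤ p.totalDegree * D := by
  conv_lhs => rw [p.as_sum, map_sum]
  refine totalDegree_finsetSum_le fun m hm => ?_
  rw [aeval_monomial, algebraMap_eq, Finsupp.prod]
  calc (C (coeff m p) * ∏ i ∈ m.support, f i ^ m i).totalDegree
      ≤ ∑ i ∈ m.support, m i * D :=
        (totalDegree_mul _ _).trans <| by
          rw [totalDegree_C, zero_add]
          exact (totalDegree_finsetProd _ _).trans <| Finset.sum_le_sum fun i _ =>
            (totalDegree_pow _ _).trans (Nat.mul_le_mul_left _ (hf i))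
    _ ≤ p.totalDegree * D := by
        rw [← Finset.sum_mul]
        exact Nat.mul_le_mul_right _ (le_totalDegree hm)

theorem natDegree_aeval_le {f : σ → Polynomial R} {D : ℕ}
    (hf : ∀ i, (f i).natDegree ≤ D) (p : MvPolynomial σ R) :
    (aeval f p).natDegree ≤ p.totalDegree * D := by
  conv_lhs => rw [p.as_sum, map_sum]
  refine Polynomial.natDegree_sum_le_of_forall_le _ _ fun m hm => ?_
  rw [aeval_monomial, Polynomial.algebraMap_eq, Finsupp.prod]
  calc (Polynomial.C (coeff m p) * ∏ i ∈ m.support, f i ^ m i).natDegree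
      ≤ ∑ i ∈ m.support, m i * D :=
        (Polynomial.natDegree_C_mul_le _ _).trans <|
          (Polynomial.natDegree_prod_le _ _).trans <| Finset.sum_le_sum fun i _ =>
            Polynomial.natDegree_pow_le.trans (Nat.mul_le_mul_left _ (hf i))
    _ ≤ p.totalDegree * D := by
        rw [← Finset.sum_mul]
        exact Nat.mul_le_mul_right _ (le_totalDegree hm)

theorem aeval_monomial_fin_two {S : Type*} [CommSemiring S] [Algebra R S]
    (f : Fin 2 → S) (m : Fin 2 →₀ ℕ) (c : R) :
    aeval f (monomial m c) = algebraMap R S c * (f 0 ^ m 0 * f 1 ^ m 1) := by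
  rw [aeval_monomial, Finsupp.prod_fintype _ _ fun _ => pow_zero _, Fin.prod_univ_two]

end MvPolynomial

theorem Polynomial.totalDegree_toMvPolynomial_le {σ R : Type*} [CommSemiring R]
    (i : σ) (s : Polynomial R) : (s.toMvPolynomial i).totalDegree ≤ s.natDegree := by
  rw [Polynomial.toMvPolynomial, Polynomial.aeval_eq_sum_range]
  refine totalDegree_finsetSum_le fun n hn => ?_
  calc (s.coeff n • MvPolynomial.X i ^ n : MvPolynomial σ R).totalDegree
      ≤ n * 1 := (totalDegree_smul_le _ _).trans <|
        (totalDegree_pow _ _).trans (Nat.mul_le_mul_left _ (totalDegree_X_le i))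
    _ ≤ s.natDegree := by simpa [Nat.lt_succ_iff] using hn

theorem Finsupp.sum_fin_two (m : Fin 2 →₀ ℕ) : (m.sum fun _ e => e) = m 0 + m 1 := by
  rw [Finsupp.sum_fintype _ _ fun _ => rfl, Fin.sum_univ_two]

theorem Nat.add_mul_lt_mul_of_add_le {a b k d : ℕ} (hab : a + b ≤ k) (hne : ¬(a = 0 ∧ b = k))
    (hd : 2 ≤ d) : a + b * d < k * d := by
  obtain ⟨c, rfl⟩ : ∃ c, k = b + c := Nat.exists_eq_add_of_le (by omega)
  have hc : 1 ≤ c := by omega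
  nlinarith

theorem coeff_aeval_X_pair {R : Type*} [CommSemiring R] {k d : ℕ} (hd : 2 ≤ d)
    (p : MvPolynomial (Fin 2) R) (hp : p.totalDegree ≤ k) (g : Polynomial R)
    (hg : g.natDegree ≤ d) :
    (aeval ![Polynomial.X, g] p).coeff (k * d) = coeff (Finsupp.single 1 k) p * g.coeff d ^ k := by
  conv_lhs => rw [p.as_sum, map_sum, Polynomial.finsetSum_coeff]
  simp only [aeval_monomial_fin_two, Polynomial.algebraMap_eq, Polynomial.coeff_C_mul,
    Matrix.cons_val_zero, Matrix.cons_val_one]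
  refine (Finset.sum_eq_single (Finsupp.single 1 k) (fun m hm hne => ?_) fun h => ?_).trans ?_
  · have hm_le : m 0 + m 1 ≤ k := (Finsupp.sum_fin_two m) ▸ (le_totalDegree hm).trans hp
    have hm_ne : ¬(m 0 = 0 ∧ m 1 = k) := fun ⟨h0, h1⟩ => hne <| by
      ext i; fin_cases i <;> simp [h0, h1]
    rw [Polynomial.coeff_eq_zero_of_natDegree_lt, mul_zero]
    calc (Polynomial.X ^ m 0 * g ^ m 1).natDegree ≤ m 0 + m 1 * d :=
          Polynomial.natDegree_mul_le.trans <| add_le_add (Polynomial.natDegree_X_pow_le _)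
            (Polynomial.natDegree_pow_le.trans (Nat.mul_le_mul_left _ hg))
      _ < k * d := Nat.add_mul_lt_mul_of_add_le hm_le hm_ne hd
  · rw [notMem_support_iff.mp h, zero_mul]
  · simp [Polynomial.coeff_pow_of_natDegree_le hg]

section Shear

variable {R : Type*} [CommRing R]

noncomputable def shear (s : Polynomial R) : MvPolynomial (Fin 2) R →ₐ[R] MvPolynomial (Fin 2) R :=
  aeval ![X 0, X 1 - s.toMvPolynomial 0]

theorem eval_shear (s : Polynomial R) (x : Fin 2 → R) (p : MvPolynomial (Fin 2) R) :
    eval x (shear s p) = eval ![x 0, x 1 - s.eval (x 0)] p := by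
  rw [shear, aeval_eq_bind₁]
  refine (eval₂Hom_bind₁ (RingHom.id R) x _ p).trans (congrArg (eval · p) (funext fun i => ?_))
  fin_cases i <;> simp

theorem totalDegree_shear_le (s : Polynomial R) (hs : 1 ≤ s.natDegree)
    (p : MvPolynomial (Fin 2) R) : (shear s p).totalDegree ≤ p.totalDegree * s.natDegree := by
  refine totalDegree_aeval_le (fun i => ?_) p
  fin_cases i
  · exact (totalDegree_X_le 0).trans hs
  · exact (totalDegree_sub _ _).trans
      (max_le ((totalDegree_X_le 1).trans hs) (Polynomial.totalDegree_toMvPolynomial_le 0 s))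

theorem aeval_X_zero_shear (s : Polynomial R) (p : MvPolynomial (Fin 2) R) :
    aeval ![Polynomial.X, 0] (shear s p) = aeval ![Polynomial.X, -s] p := by
  rw [shear, aeval_eq_bind₁, aeval_bind₁]
  congr 2
  funext i
  fin_cases i <;> simp

theorem totalDegree_shear [IsDomain R] {p : MvPolynomial (Fin 2) R} {k : ℕ}
    (hp : p.totalDegree = k) (hcoeff : coeff (Finsupp.single 1 k) p ≠ 0)
    {s : Polynomial R} {d : ℕ} (hs : s.natDegree = d) (hd : 2 ≤ d) :
    (shear s p).totalDegree = k * d := by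
  refine le_antisymm (hp ▸ hs ▸ totalDegree_shear_le s (by omega) p) ?_
  have hlead : (aeval ![Polynomial.X, -s] p).coeff (k * d) ≠ 0 := by
    rw [coeff_aeval_X_pair hd p hp.le _ (by simp [hs]), Polynomial.coeff_neg, ← hs,
      Polynomial.coeff_natDegree]
    refine mul_ne_zero hcoeff (pow_ne_zero _ (neg_ne_zero.mpr ?_))
    exact Polynomial.leadingCoeff_ne_zero.mpr (by rintro rfl; simp at hs; omega)
  calc k * d ≤ (aeval ![Polynomial.X, -s] p).natDegree := Polynomial.le_natDegree_of_ne_zero hlead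
    _ = (aeval ![Polynomial.X, 0] (shear s p)).natDegree := by rw [aeval_X_zero_shear]
    _ ≤ (shear s p).totalDegree * 1 := natDegree_aeval_le (fun i => by fin_cases i <;> simp) _
    _ = (shear s p).totalDegree := mul_one _

end Shear

theorem totalDegree_substitution_general
    (R : MvPolynomial (Fin 2) ℂ) (k : ℕ)
    (hdeg : R.totalDegree = k)
    (hcoeff : MvPolynomial.coeff (Finsupp.single (1 : Fin 2) k) R ≠ 0)
    (s : Polynomial ℂ) (d : ℕ) (hd : 2 ≤ d) (hs : s.natDegree = d)
    (Rt : MvPolynomial (Fin 2) ℂ)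
    (hRt : ∀ w₁ w₂ : ℂ, MvPolynomial.eval ![w₁, w₂] Rt =
      MvPolynomial.eval ![w₁, w₂ - s.eval w₁] R) :
    Rt.totalDegree = k * d := by
  have hRt_eq : Rt = shear s R := MvPolynomial.funext fun x => by
    rw [eval_shear, ← hRt]
    congr
    ext i; fin_cases i <;> rfl
  rw [hRt_eq]
  exact totalDegree_shear hdeg hcoeff hs hd

/-- degree computation of Section 3: substituting `w₂ ↦ w₂ - s w₁`, where
`s` is a one-variable polynomial of degree `d ≥ 2`, into a degree-`k` polynomial `R`
whose `w₂^k`-coefficient is nonzero produces a polynomial of total degree exactly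
`k * d`. -/
theorem totalDegree_substitution
    (R : MvPolynomial (Fin 2) ℂ) (k : ℕ) (hk : 1 ≤ k)
    (hdeg : R.totalDegree = k)
    (hcoeff : MvPolynomial.coeff (Finsupp.single (1 : Fin 2) k) R ≠ 0)
    (s : Polynomial ℂ) (d : ℕ) (hd : 2 ≤ d) (hs : s.natDegree = d)
    (Rt : MvPolynomial (Fin 2) ℂ)
    (hRt : ∀ w₁ w₂ : ℂ, MvPolynomial.eval ![w₁, w₂] Rt =
      MvPolynomial.eval ![w₁, w₂ - s.eval w₁] R) :
    Rt.totalDegree = k * d :=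
  totalDegree_substitution_general R k hdeg hcoeff s d hd hs Rt hRt
end
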